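/- arXiv:1504.05155 — 2 statements merged into one kernel-verified Lean document; each statement's English description precedes it below -/
import Mathlib

section
/- Any linear transformation A over F₂ that preserves Hamming weight mod 4 (|Ax| ≡ |x| (mod 4) for all x) is orthogonal: Ax·Ay ≡ x·y (mod 2) for all x, y. -/
def wt {n : ℕ} (v : Fin n → ZMod 2) : ℕ :=
  (Finset.univ.filter fun i => v i = 1).card

def ip {n : ℕ} (u v : Fin n → ZMod 2) : ℕ :=
  (Finset.univ.filter fun i => u i = 1 ∧ v i = 1).card

lemma wt_add {n : ℕ} (u v : Fin n → ZMod 2) :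
    wt (u + v) + 2 * ip u v = wt u + wt v := by
  classical
  unfold wt ip
  have hfil : (Finset.univ.filter fun i => (u + v) i = 1) =
      symmDiff (Finset.univ.filter fun i => u i = 1) (Finset.univ.filter fun i => v i = 1) := by
    ext i
    simp only [Finset.mem_symmDiff, Finset.mem_filter, Finset.mem_univ, true_and, Pi.add_apply]
    have : ∀ a b : ZMod 2, (a + b = 1 ↔ (a = 1 ∧ ¬ b = 1) ∨ (b = 1 ∧ ¬ a = 1)) := by decide
    exact this (u i) (v i)
  have hint : (Finset.univ.filter fun i => u i = 1 ∧ v i = 1) =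
      (Finset.univ.filter fun i => u i = 1) ∩ (Finset.univ.filter fun i => v i = 1) := by
    ext i; simp [Finset.mem_inter]
  rw [hfil, hint]
  set S := Finset.univ.filter fun i => u i = 1
  set T := Finset.univ.filter fun i => v i = 1
  have h1 : (S ∪ T).card + (S ∩ T).card = S.card + T.card := Finset.card_union_add_card_inter S T
  have h2 : (symmDiff S T).card = (S ∪ T).card - (S ∩ T).card := by
    rw [symmDiff_eq_sup_sdiff_inf]
    exact Finset.card_sdiff_of_subset Finset.inter_subset_union
  have h3 : (S ∩ T).card ≤ (S ∪ T).card :=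
    Finset.card_le_card Finset.inter_subset_union
  omega

theorem stmt_8 (n : ℕ) (A : Matrix (Fin n) (Fin n) (ZMod 2)) (hA : IsUnit A)
    (h : ∀ x : Fin n → ZMod 2, wt (A.mulVec x) ≡ wt x [MOD 4]) :
    ∀ x y : Fin n → ZMod 2, ip (A.mulVec x) (A.mulVec y) ≡ ip x y [MOD 2] := by
  intro x y
  have h1 := h x
  have h2 := h y
  have h3 := h (x + y)
  have e1 := wt_add x y
  have e2 := wt_add (A.mulVec x) (A.mulVec y)
  rw [← Matrix.mulVec_add] at e2
  unfold Nat.ModEq at *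
  omega
end

section
/- Let F(x) = Ax ⊕ b be an affine bijection of F₂ⁿ. Then F preserves Hamming weight mod 4 (|F(x)| ≡ |x| (mod 4) for all x) if and only if |b| ≡ 0 (mod 4), the columns vᵢ = Aeᵢ satisfy |vᵢ| + 2(vᵢ·b) ≡ 1 (mod 4) for all i, and vᵢ·vⱼ ≡ 0 (mod 2) for all i ≠ j. -/
open Finset Matrix

section Weight

variable {n : ℕ}

lemma ip_comm (u v : Fin n → ZMod 2) : ip u v = ip v u := by
  simp only [ip, and_comm]

lemma wt_add_add_two_mul_ip (u v : Fin n → ZMod 2) :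
    wt (u + v) + 2 * ip u v = wt u + wt v := by
  simp only [wt, ip, card_filter, mul_sum, ← sum_add_distrib]
  refine sum_congr rfl fun i _ => ?_
  have key : ∀ a b : ZMod 2, (if a + b = 1 then 1 else 0) + 2 * (if a = 1 ∧ b = 1 then 1 else 0)
      = (if a = 1 then 1 else 0) + (if b = 1 then 1 else 0) := by decide
  exact key (u i) (v i)

lemma natCast_ip (u v : Fin n → ZMod 2) : (ip u v : ZMod 2) = u ⬝ᵥ v := by
  simp only [ip, card_filter, Nat.cast_sum, dotProduct]
  refine sum_congr rfl fun i _ => ?_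
  have key : ∀ a b : ZMod 2, ((if a = 1 ∧ b = 1 then 1 else 0 : ℕ) : ZMod 2) = a * b := by decide
  exact key (u i) (v i)

lemma ip_modEq_two_iff {u v u' v' : Fin n → ZMod 2} :
    ip u v ≡ ip u' v' [MOD 2] ↔ u ⬝ᵥ v = u' ⬝ᵥ v' := by
  rw [← ZMod.natCast_eq_natCast_iff, natCast_ip, natCast_ip]

lemma ip_modEq_zero_two_iff {u v : Fin n → ZMod 2} : ip u v ≡ 0 [MOD 2] ↔ u ⬝ᵥ v = 0 := by
  rw [← ZMod.natCast_eq_natCast_iff, natCast_ip, Nat.cast_zero]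

lemma ip_add_left_modEq (u v w : Fin n → ZMod 2) :
    ip (u + v) w ≡ ip u w + ip v w [MOD 2] := by
  rw [← ZMod.natCast_eq_natCast_iff, Nat.cast_add, natCast_ip, natCast_ip, natCast_ip,
    add_dotProduct]

lemma wt_single (i : Fin n) : wt (Pi.single i 1 : Fin n → ZMod 2) = 1 := by
  simp [wt, Pi.single_apply, filter_eq']

lemma wt_single_add_single {i j : Fin n} (hij : i ≠ j) :
    wt (Pi.single i 1 + Pi.single j 1 : Fin n → ZMod 2) = 2 := by
  have hip : ip (Pi.single i 1 : Fin n → ZMod 2) (Pi.single j 1) = 0 := by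
    simp [ip, Pi.single_apply, hij]
  have := wt_add_add_two_mul_ip (Pi.single i 1 : Fin n → ZMod 2) (Pi.single j 1)
  rw [hip, wt_single, wt_single] at this
  omega

-- Modulo 4, `2 * ip y v` only sees the parity of `ip y v`.
lemma wt_add_modEq_succ {y v b : Fin n → ZMod 2} (hv : wt v + 2 * ip v b ≡ 1 [MOD 4])
    (hyv : ip y v ≡ ip v b [MOD 2]) : wt (y + v) ≡ wt y + 1 [MOD 4] := by
  have := wt_add_add_two_mul_ip y v
  unfold Nat.ModEq at *
  omega

lemma wt_sum_add_modEq {ι : Type*} [DecidableEq ι] (v : ι → Fin n → ZMod 2)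
    (b : Fin n → ZMod 2) (hv : ∀ i, wt (v i) + 2 * ip (v i) b ≡ 1 [MOD 4])
    (horth : Pairwise fun i j => ip (v i) (v j) ≡ 0 [MOD 2]) (s : Finset ι) :
    wt (∑ i ∈ s, v i + b) ≡ wt b + #s [MOD 4] := by
  induction s using Finset.induction_on with
  | empty => simp [Nat.ModEq.refl]
  | @insert k s hk ih =>
    have horth_k : (∑ i ∈ s, v i) ⬝ᵥ v k = 0 :=
      (sum_dotProduct ..).trans <| sum_eq_zero fun i hi =>
        ip_modEq_zero_two_iff.1 (horth (ne_of_mem_of_not_mem hi hk))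
    have hyv : ip (∑ i ∈ s, v i + b) (v k) ≡ ip (v k) b [MOD 2] := by
      rw [ip_modEq_two_iff, add_dotProduct, horth_k, zero_add, dotProduct_comm]
    rw [sum_insert hk, card_insert_of_notMem hk, add_comm (v k), add_right_comm]
    exact (wt_add_modEq_succ (hv k) hyv).trans (ih.add_right 1)

lemma wt_add_two_mul_ip_modEq_one {v b : Fin n → ZMod 2} (hb : wt b ≡ 0 [MOD 4])
    (hvb : wt (v + b) ≡ 1 [MOD 4]) : wt v + 2 * ip v b ≡ 1 [MOD 4] := by
  have := wt_add_add_two_mul_ip v b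
  unfold Nat.ModEq at *
  omega

lemma ip_modEq_zero_of_wt_add_modEq {u v b : Fin n → ZMod 2} (hb : wt b ≡ 0 [MOD 4])
    (hub : wt (u + b) ≡ 1 [MOD 4]) (hvb : wt (v + b) ≡ 1 [MOD 4])
    (huvb : wt (u + b + v) ≡ 2 [MOD 4]) : ip u v ≡ 0 [MOD 2] := by
  have h₁ := wt_add_add_two_mul_ip (u + b) v
  have h₂ := wt_add_add_two_mul_ip v b
  have h₃ := ip_add_left_modEq u b v
  have h₄ := ip_comm b v
  unfold Nat.ModEq at *
  omega

end Weight

lemma mulVec_eq_sum_col {m ι : Type*} [Fintype ι] (A : Matrix m ι (ZMod 2)) (x : ι → ZMod 2) :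
    A *ᵥ x = ∑ i ∈ univ.filter (x · = 1), A.col i := by
  ext r
  simp only [mulVec, dotProduct, sum_filter, Finset.sum_apply, col_apply]
  refine sum_congr rfl fun i _ => ?_
  rcases (by decide : ∀ a : ZMod 2, a = 0 ∨ a = 1) (x i) with h | h <;> simp [h]

theorem stmt_10_general (n : ℕ) (A : Matrix (Fin n) (Fin n) (ZMod 2)) (b : Fin n → ZMod 2) :
    (∀ x : Fin n → ZMod 2, wt (A.mulVec x + b) ≡ wt x [MOD 4]) ↔
      (wt b ≡ 0 [MOD 4] ∧
        (∀ i, wt (fun r => A r i) + 2 * ip (fun r => A r i) b ≡ 1 [MOD 4]) ∧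
        ∀ i j, i ≠ j → ip (fun r => A r i) (fun r => A r j) ≡ 0 [MOD 2]) := by
  constructor
  · intro h
    have hb : wt b ≡ 0 [MOD 4] := by simpa [wt] using h 0
    have hcol (i : Fin n) : wt (A.col i + b) ≡ 1 [MOD 4] := by
      simpa [mulVec_single_one, wt_single] using h (Pi.single i 1)
    refine ⟨hb, fun i => wt_add_two_mul_ip_modEq_one hb (hcol i), fun i j hij => ?_⟩
    have hij' := h (Pi.single i 1 + Pi.single j 1)
    rw [mulVec_add, mulVec_single_one, mulVec_single_one, wt_single_add_single hij,
      add_right_comm] at hij'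
    exact ip_modEq_zero_of_wt_add_modEq hb (hcol i) (hcol j) hij'
  · rintro ⟨hb, hcol, hpair⟩ x
    have hx : wt b + wt x ≡ wt x [MOD 4] := by simpa only [zero_add] using hb.add_right (wt x)
    rw [mulVec_eq_sum_col]
    exact (wt_sum_add_modEq A.col b hcol (fun i j => hpair i j) _).trans hx

theorem stmt_10 (n : ℕ) (A : Matrix (Fin n) (Fin n) (ZMod 2)) (b : Fin n → ZMod 2)
    (hA : IsUnit A) :
    (∀ x : Fin n → ZMod 2, wt (A.mulVec x + b) ≡ wt x [MOD 4]) ↔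
      (wt b ≡ 0 [MOD 4] ∧
        (∀ i, wt (fun r => A r i) + 2 * ip (fun r => A r i) b ≡ 1 [MOD 4]) ∧
        ∀ i j, i ≠ j → ip (fun r => A r i) (fun r => A r j) ≡ 0 [MOD 2]) :=
  stmt_10_general n A b
end
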